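/- Let n ≥ 3 be an integer, ω₀ > 1, δ ∈ (0,1), and define Ĵ(a) = Σ_{m=0}^{n−1} binom(n−1, m) · ln(m+ω₀) · a^m · (1−a)^{n−1−m} for a ∈ [0,1]. Suppose v̄₁ < v̄₂ are reals with δ·v̄ᵢ > 2·ln(n−1+ω₀) for i = 1, 2, and let aᵢ ∈ (1/(2−δ), 1) be the unique solution of δ(2−δ)·a·v̄ᵢ − 2(1−δ)·Ĵ(a) = δ·v̄ᵢ. Then a₁ > a₂; that is, the equilibrium fraction of socially active users v*/v̄ strictly decreases as the maximum valuation v̄ increases. -/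

import Mathlib

/-!
Put `c = 1 / (2 - δ)`. The equilibrium equation says `v̄ = 2(1 - δ) / (δ(2 - δ)) · Ĵ(a) / (a - c)`.
Now `Ĵ` is the Bernstein polynomial of the concave sequence `m ↦ log (m + ω₀)`, so it is concave on
`[0, 1]` (its second derivative is a Bernstein polynomial of second differences), and `Ĵ(c) ≥ 0`.
Hence `Ĵ(a) / (a - c)`, a secant slope from `(c, 0)` lying below `(c, Ĵ(c))`, is nonincreasing in
`a > c`, and `a₁ ≤ a₂` would force `v̄₂ ≤ v̄₁`.
-/

open Real Finset

/-- The expected social-network benefit when every other user is active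
independently with probability `a`. -/
noncomputable def Jhat (n : ℕ) (ω₀ : ℝ) (a : ℝ) : ℝ :=
  ∑ m ∈ Finset.range n, (Nat.choose (n - 1) m : ℝ) * Real.log ((m : ℝ) + ω₀) *
    a ^ m * (1 - a) ^ (n - 1 - m)

open Polynomial

noncomputable def bernsteinSum {R : Type*} [CommRing R] (N : ℕ) (f : ℕ → R) : R[X] :=
  ∑ m ∈ range (N + 1), C (f m) * bernsteinPolynomial R N m

section

variable {R : Type*} [CommRing R]

theorem sum_range_succ_mul_bernsteinPolynomial_succ (N : ℕ) (f : ℕ → R) :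
    ∑ m ∈ range (N + 1), C (f (m + 1)) * bernsteinPolynomial R N (m + 1) =
      bernsteinSum N f - C (f 0) * bernsteinPolynomial R N 0 := by
  rw [eq_sub_iff_add_eq, bernsteinSum,
    ← sum_range_succ' (fun m => C (f m) * bernsteinPolynomial R N m), sum_range_succ,
    bernsteinPolynomial.eq_zero_of_lt R N.lt_succ_self, mul_zero, add_zero]

theorem derivative_bernsteinSum (N : ℕ) (f : ℕ → R) :
    derivative (bernsteinSum N f) = bernsteinSum (N - 1) (fun m => N * (f (m + 1) - f m)) := by
  cases N with
  | zero => simp [bernsteinSum, bernsteinPolynomial]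
  | succ N =>
    have hshift := sum_range_succ_mul_bernsteinPolynomial_succ N f
    have hrhs : bernsteinSum N (fun m => ((N + 1 : ℕ) : R) * (f (m + 1) - f m)) =
        (N + 1 : ℕ) * (∑ m ∈ range (N + 1), C (f (m + 1)) * bernsteinPolynomial R N m
          - bernsteinSum N f) := by
      rw [bernsteinSum, bernsteinSum, ← sum_sub_distrib, mul_sum]
      refine sum_congr rfl fun m _ => ?_
      simp only [map_mul, map_sub, map_natCast]
      ring
    rw [Nat.add_sub_cancel, hrhs, bernsteinSum, derivative_sum, sum_range_succ']
    simp only [derivative_C_mul, bernsteinPolynomial.derivative_succ,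
      bernsteinPolynomial.derivative_zero, Nat.add_sub_cancel, mul_sub, sum_sub_distrib,
      mul_left_comm (C _) ((N + 1 : ℕ) : R[X]), ← mul_sum, hshift]
    ring

theorem eval_bernsteinSum (N : ℕ) (f : ℕ → R) (x : R) :
    (bernsteinSum N f).eval x = ∑ m ∈ range (N + 1), f m * (bernsteinPolynomial R N m).eval x := by
  simp only [bernsteinSum, eval_finsetSum, eval_mul, eval_C]

end

theorem eval_bernsteinPolynomial_nonneg (N m : ℕ) {x : ℝ} (hx : x ∈ Set.Icc 0 1) :
    0 ≤ (bernsteinPolynomial ℝ N m).eval x := by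
  have hx1 : 0 ≤ 1 - x := sub_nonneg.2 hx.2
  simp only [bernsteinPolynomial, eval_mul, eval_pow, eval_sub, eval_one, eval_X, eval_natCast]
  exact mul_nonneg (mul_nonneg (Nat.cast_nonneg _) (pow_nonneg hx.1 _)) (pow_nonneg hx1 _)

theorem eval_bernsteinSum_nonpos {N : ℕ} {f : ℕ → ℝ} (hf : ∀ m, f m ≤ 0) {x : ℝ}
    (hx : x ∈ Set.Icc 0 1) : (bernsteinSum N f).eval x ≤ 0 := by
  rw [eval_bernsteinSum]
  exact sum_nonpos fun m _ =>
    mul_nonpos_of_nonpos_of_nonneg (hf m) (eval_bernsteinPolynomial_nonneg N m hx)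

theorem Polynomial.concaveOn_eval_of_derivative_derivative_nonpos {D : Set ℝ} (hD : Convex ℝ D)
    (P : ℝ[X]) (hP : ∀ x ∈ interior D, (derivative (derivative P)).eval x ≤ 0) :
    ConcaveOn ℝ D (fun x => P.eval x) := by
  have hderiv : deriv (fun x => P.eval x) = fun x => (derivative P).eval x :=
    _root_.funext fun x => Polynomial.deriv (p := P) (x := x)
  refine concaveOn_of_deriv2_nonpos hD P.continuous.continuousOn P.differentiable.differentiableOn
    ?_ fun x hx => ?_
  · rw [hderiv]
    exact (derivative P).differentiable.differentiableOn
  · rw [Function.iterate_succ_apply, Function.iterate_one, hderiv, Polynomial.deriv]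
    exact hP x hx

theorem concaveOn_eval_bernsteinSum {f : ℕ → ℝ} (hf : ∀ m, f m + f (m + 2) ≤ 2 * f (m + 1))
    (N : ℕ) : ConcaveOn ℝ (Set.Icc 0 1) (fun x => (bernsteinSum N f).eval x) := by
  refine (bernsteinSum N f).concaveOn_eval_of_derivative_derivative_nonpos (convex_Icc 0 1)
    fun x hx => ?_
  rw [derivative_bernsteinSum, derivative_bernsteinSum]
  refine eval_bernsteinSum_nonpos (fun m => ?_) (interior_subset hx)
  have hNN : (0 : ℝ) ≤ ((N - 1 : ℕ) : ℝ) * N := by positivity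
  nlinarith [hf m]

theorem log_add_log_add_two_le (x : ℝ) (hx : 0 < x) : log x + log (x + 2) ≤ 2 * log (x + 1) := by
  rw [← log_mul hx.ne' (by linarith), two_mul, ← log_mul (by linarith) (by linarith)]
  exact log_le_log (by positivity) (by nlinarith)

theorem Jhat_succ_eq_eval (N : ℕ) (ω₀ a : ℝ) :
    Jhat (N + 1) ω₀ a = (bernsteinSum N fun m => log (m + ω₀)).eval a := by
  rw [eval_bernsteinSum, Jhat, Nat.add_sub_cancel]
  refine sum_congr rfl fun m _ => ?_
  simp only [bernsteinPolynomial, eval_mul, eval_pow, eval_sub, eval_one, eval_X, eval_natCast]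
  ring

theorem concaveOn_Jhat (n : ℕ) {ω₀ : ℝ} (hω : 0 < ω₀) : ConcaveOn ℝ (Set.Icc 0 1) (Jhat n ω₀) := by
  cases n with
  | zero =>
    have hzero : Jhat 0 ω₀ = fun _ => 0 := funext fun _ => by simp [Jhat]
    exact hzero ▸ concaveOn_const 0 (convex_Icc 0 1)
  | succ N =>
    simp only [_root_.funext (Jhat_succ_eq_eval N ω₀)]
    refine concaveOn_eval_bernsteinSum (fun m => ?_) N
    have := log_add_log_add_two_le (m + ω₀) (by positivity)
    push_cast
    convert this using 3 <;> ring_nf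

theorem Jhat_nonneg (n : ℕ) {ω₀ a : ℝ} (hω : 1 ≤ ω₀) (ha : a ∈ Set.Icc 0 1) : 0 ≤ Jhat n ω₀ a := by
  have ha1 : 0 ≤ 1 - a := sub_nonneg.2 ha.2
  refine sum_nonneg fun m _ => mul_nonneg (mul_nonneg (mul_nonneg (Nat.cast_nonneg _) ?_)
    (pow_nonneg ha.1 _)) (pow_nonneg ha1 _)
  exact log_nonneg (by linarith [(m.cast_nonneg : (0 : ℝ) ≤ m)])

theorem ConcaveOn.antitoneOn_div_sub {𝕜 : Type*} [Field 𝕜] [LinearOrder 𝕜] [IsStrictOrderedRing 𝕜]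
    {s : Set 𝕜} {f : 𝕜 → 𝕜} {c : 𝕜} (hf : ConcaveOn 𝕜 s f) (hc : c ∈ s) (hfc : 0 ≤ f c) :
    AntitoneOn (fun x => f x / (x - c)) {x ∈ s | c < x} := by
  intro x hx y hy hxy
  have hslope : slope f c y ≤ slope f c x := hf.antitoneOn_slope_gt hc hx hy hxy
  have hconst : f c / (y - c) ≤ f c / (x - c) :=
    div_le_div_of_nonneg_left hfc (sub_pos.2 hx.2) (sub_le_sub_right hxy c)
  rw [slope_def_field, slope_def_field] at hslope
  calc f y / (y - c) = (f y - f c) / (y - c) + f c / (y - c) := by rw [sub_div, sub_add_cancel]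
    _ ≤ (f x - f c) / (x - c) + f c / (x - c) := add_le_add hslope hconst
    _ = f x / (x - c) := by rw [sub_div, sub_add_cancel]

theorem eq_mul_div_of_equilibrium {δ v a J : ℝ} (hδ : δ ∈ Set.Ioo 0 1) (ha : 1 / (2 - δ) < a)
    (he : δ * (2 - δ) * a * v - 2 * (1 - δ) * J = δ * v) :
    v = 2 * (1 - δ) / (δ * (2 - δ)) * (J / (a - 1 / (2 - δ))) := by
  have hδ0 : δ ≠ 0 := hδ.1.ne'
  have h2δ : 0 < 2 - δ := by linarith [hδ.2]
  have hac : 0 < (2 - δ) * a - 1 := by rwa [div_lt_iff₀' h2δ, ← sub_pos] at ha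
  field_simp
  linear_combination he

theorem stmt3_general (n : ℕ) (ω₀ δ : ℝ) (hω : 1 < ω₀)
    (hδ : δ ∈ Set.Ioo (0 : ℝ) 1)
    (vbar1 vbar2 : ℝ) (h12 : vbar1 < vbar2)
    (a1 a2 : ℝ)
    (ha1 : a1 ∈ Set.Ioo (1 / (2 - δ)) 1) (ha2 : a2 ∈ Set.Ioo (1 / (2 - δ)) 1)
    (he1 : δ * (2 - δ) * a1 * vbar1 - 2 * (1 - δ) * Jhat n ω₀ a1 = δ * vbar1)
    (he2 : δ * (2 - δ) * a2 * vbar2 - 2 * (1 - δ) * Jhat n ω₀ a2 = δ * vbar2) :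
    a2 < a1 := by
  have hδ0 : 0 < δ := hδ.1
  have h2δ : 0 < 2 - δ := by linarith [hδ.2]
  have h1δ : 0 < 1 - δ := by linarith [hδ.2]
  have hc : 1 / (2 - δ) ∈ Set.Icc (0 : ℝ) 1 :=
    ⟨by positivity, (div_le_one₀ h2δ).2 (by linarith [hδ.2])⟩
  by_contra! h21
  have hslope : Jhat n ω₀ a2 / (a2 - 1 / (2 - δ)) ≤ Jhat n ω₀ a1 / (a1 - 1 / (2 - δ)) :=
    (concaveOn_Jhat n (by linarith)).antitoneOn_div_sub hc (Jhat_nonneg n hω.le hc)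
      ⟨⟨hc.1.trans ha1.1.le, ha1.2.le⟩, ha1.1⟩ ⟨⟨hc.1.trans ha2.1.le, ha2.2.le⟩, ha2.1⟩ h21
  have hκ : 0 ≤ 2 * (1 - δ) / (δ * (2 - δ)) := by positivity
  rw [eq_mul_div_of_equilibrium hδ ha1.1 he1, eq_mul_div_of_equilibrium hδ ha2.1 he2] at h12
  exact (mul_le_mul_of_nonneg_left hslope hκ).not_gt h12

/-- The equilibrium fraction of socially active users strictly decreases as the
maximum valuation increases: if `v̄₁ < v̄₂` and `aᵢ ∈ (1/(2−δ), 1)` solves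
`δ(2−δ)·a·v̄ᵢ − 2(1−δ)·Ĵ(a) = δ·v̄ᵢ`, then `a₁ > a₂`. -/
theorem stmt3 (n : ℕ) (hn : 3 ≤ n) (ω₀ δ : ℝ) (hω : 1 < ω₀)
    (hδ : δ ∈ Set.Ioo (0 : ℝ) 1)
    (vbar1 vbar2 : ℝ) (h12 : vbar1 < vbar2)
    (h1 : 2 * Real.log ((n : ℝ) - 1 + ω₀) < δ * vbar1)
    (h2 : 2 * Real.log ((n : ℝ) - 1 + ω₀) < δ * vbar2)
    (a1 a2 : ℝ)
    (ha1 : a1 ∈ Set.Ioo (1 / (2 - δ)) 1) (ha2 : a2 ∈ Set.Ioo (1 / (2 - δ)) 1)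
    (he1 : δ * (2 - δ) * a1 * vbar1 - 2 * (1 - δ) * Jhat n ω₀ a1 = δ * vbar1)
    (he2 : δ * (2 - δ) * a2 * vbar2 - 2 * (1 - δ) * Jhat n ω₀ a2 = δ * vbar2) :
    a2 < a1 :=
  stmt3_general n ω₀ δ hω hδ vbar1 vbar2 h12 a1 a2 ha1 ha2 he1 he2
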